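/- arXiv:1912.09480 — 11 statements merged into one kernel-verified Lean document; each statement's English description precedes it below -/
import Mathlib

section
/- If ⊢ is a regular entailment relation on a preordered commutative group G, then for all a, x in G: {a + x, a - x} ⊢ {a} and {a} ⊢ {a + x, a - x}. -/
open Finset Pointwise

/-- A regular entailment relation on a preordered commutative group `G`:
a relation between nonempty finite subsets of `G` satisfying weakening, cut,
`{a} ⊢ {b}` when `a ≤ b`, translation invariance, and regularity. -/
structure IsRegularEntailment {G : Type*} [AddCommGroup G] [Preorder G]
    [CovariantClass G G (· + ·) (· ≤ ·)] [DecidableEq G]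
    (r : Finset G → Finset G → Prop) : Prop where
  weaken : ∀ {A A' B B' : Finset G}, A'.Nonempty → B'.Nonempty →
    A' ⊆ A → B' ⊆ B → r A' B' → r A B
  cut : ∀ {A B : Finset G} (x : G), A.Nonempty → B.Nonempty →
    r (insert x A) B → r A (insert x B) → r A B
  of_le : ∀ {a b : G}, a ≤ b → r {a} {b}
  translate : ∀ {A B : Finset G} (x : G),
    r (A.image (· + x)) (B.image (· + x)) → r A B
  regular : ∀ a b x y : G, r {a + x, b + y} {a + b, x + y}

theorem regular_entailment_split {G : Type*} [AddCommGroup G] [Preorder G]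
    [CovariantClass G G (· + ·) (· ≤ ·)] [DecidableEq G]
    (r : Finset G → Finset G → Prop) (hr : IsRegularEntailment r)
    (a x : G) : r {a + x, a - x} {a} ∧ r {a} {a + x, a - x} := by
  have h₁ := hr.regular 0 a (a + x) (-x)
  have h₂ := hr.regular 0 (a + x) a (-x)
  simp only [zero_add, ← sub_eq_add_neg, add_sub_cancel_right, pair_eq_singleton] at h₁ h₂
  exact ⟨h₁, h₂⟩
end

section
/- Let ⊢ be a regular entailment relation on a preordered commutative group G. If A ∪ (A + x) ⊢ B and A ∪ (A - x) ⊢ B, then A ⊢ B. Symmetrically, if A ⊢ B ∪ (B + x) and A ⊢ B ∪ (B - x), then A ⊢ B. -/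
open Finset Pointwise

/-!
Both halves are proved by cutting, one element at a time, the translated copies of `A` (resp. `B`).
On the left, after cutting all of `A + x` and then all of `A - x`, every remaining sequent has the
form `A ⊢ {a' - x, a + x} ∪ B` with `a, a' ∈ A`; it holds by regularity, since
`{(a' - x) + x, 0 + a} ⊢ {(a' - x) + 0, x + a}`. The right half is dual, using
`{b + x, 0 + (b' - x)} ⊢ {b + 0, x + (b' - x)}`.
-/

namespace IsRegularEntailment

variable {G : Type*} [AddCommGroup G] [Preorder G] [CovariantClass G G (· + ·) (· ≤ ·)]
  [DecidableEq G] {r : Finset G → Finset G → Prop}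

lemma cut_finset_left (hr : IsRegularEntailment r) {A B : Finset G} (C : Finset G)
    (hA : A.Nonempty) (hB : B.Nonempty) (h : r (A ∪ C) B) (hC : ∀ c ∈ C, r A (insert c B)) :
    r A B := by
  induction C using Finset.induction_on with
  | empty => simpa using h
  | @insert c C _ ih =>
    refine ih (hr.cut c (hA.mono subset_union_left) hB (by rwa [← union_insert]) ?_)
      fun d hd => hC d (mem_insert_of_mem hd)
    exact hr.weaken hA (insert_nonempty _ _) subset_union_left subset_rfl
      (hC c (mem_insert_self _ _))

lemma cut_finset_right (hr : IsRegularEntailment r) {A B : Finset G} (C : Finset G)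
    (hA : A.Nonempty) (hB : B.Nonempty) (h : r A (B ∪ C)) (hC : ∀ c ∈ C, r (insert c A) B) :
    r A B := by
  induction C using Finset.induction_on with
  | empty => simpa using h
  | @insert c C _ ih =>
    refine ih (hr.cut c hA (hB.mono subset_union_left) ?_ (by rwa [← union_insert]))
      fun d hd => hC d (mem_insert_of_mem hd)
    exact hr.weaken (insert_nonempty _ _) hB subset_rfl subset_union_left
      (hC c (mem_insert_self _ _))

lemma regular_of_mem (hr : IsRegularEntailment r) {A B : Finset G} {a b x y : G}
    (hax : a + x ∈ A) (hby : b + y ∈ A) (hab : a + b ∈ B) (hxy : x + y ∈ B) : r A B :=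
  hr.weaken (insert_nonempty _ _) (insert_nonempty _ _) (insert_subset hax (by simpa))
    (insert_subset hab (by simpa)) (hr.regular a b x y)

lemma case_split_left (hr : IsRegularEntailment r) {A B : Finset G} (hA : A.Nonempty)
    (hB : B.Nonempty) (x : G) (hplus : r (A ∪ A.image (· + x)) B)
    (hminus : r (A ∪ A.image (· - x)) B) : r A B := by
  refine hr.cut_finset_left _ hA hB hplus fun _ hc => ?_
  obtain ⟨a, ha, rfl⟩ := mem_image.1 hc
  refine hr.cut_finset_left _ hA (insert_nonempty _ _)
    (hr.weaken hA.inl hB subset_rfl (subset_insert _ _) hminus) fun _ hd => ?_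
  obtain ⟨a', ha', rfl⟩ := mem_image.1 hd
  exact hr.regular_of_mem (a := a' - x) (b := 0) (x := x) (y := a) (by simpa) (by simpa)
    (by simp) (by simp [add_comm x])

lemma case_split_right (hr : IsRegularEntailment r) {A B : Finset G} (hA : A.Nonempty)
    (hB : B.Nonempty) (x : G) (hplus : r A (B ∪ B.image (· + x)))
    (hminus : r A (B ∪ B.image (· - x))) : r A B := by
  refine hr.cut_finset_right _ hA hB hplus fun _ hc => ?_
  obtain ⟨b, hb, rfl⟩ := mem_image.1 hc
  refine hr.cut_finset_right _ (insert_nonempty _ _) hB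
    (hr.weaken hA hB.inl (subset_insert _ _) subset_rfl hminus) fun _ hd => ?_
  obtain ⟨b', hb', rfl⟩ := mem_image.1 hd
  exact hr.regular_of_mem (a := b) (b := 0) (x := x) (y := b' - x) (by simp) (by simp)
    (by simpa) (by simpa)

end IsRegularEntailment

theorem regular_entailment_case_split {G : Type*} [AddCommGroup G] [Preorder G]
    [CovariantClass G G (· + ·) (· ≤ ·)] [DecidableEq G]
    (r : Finset G → Finset G → Prop) (hr : IsRegularEntailment r)
    (A B : Finset G) (hA : A.Nonempty) (hB : B.Nonempty) (x : G) :
    (r (A ∪ A.image (· + x)) B → r (A ∪ A.image (· - x)) B → r A B) ∧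
    (r A (B ∪ B.image (· + x)) → r A (B ∪ B.image (· - x)) → r A B) :=
  ⟨hr.case_split_left hA hB x, hr.case_split_right hA hB x⟩
end

section
/- Let ⊢ be a regular entailment relation on a preordered commutative group G. Then A ∪ (A + x) ⊢ B if and only if A ⊢ B ∪ (B - x). -/
/-!
Regularity gives `{s, t} ⊢ {u, v}` whenever `s + t = u + v`; so if `s, t ∈ C`, then two cuts turn
`C, u ⊢ D` and `C, v ⊢ D` into `C ⊢ D`. Translating `A ∪ (A + x) ⊢ B` by `-x` gives
`A ∪ (A - x) ⊢ B - x`, and since `(a - x) + (b + x) = a + b` with `a, b ∈ A`, the elements of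
`A - x` and of `A + x` can be cut away one at a time against `B ∪ (B - x)`, leaving
`A ⊢ B ∪ (B - x)`. The axioms are invariant under `A ⊢ B ↦ -B ⊢ -A`, and this duality turns the
implication just proved into its converse.
-/

open Finset Pointwise

lemma Finset.neg_union {α : Type*} [DecidableEq α] [Neg α] (s t : Finset α) :
    -(s ∪ t) = -s ∪ -t :=
  image_union _ _

lemma Finset.neg_image_add_right {α : Type*} [SubtractionCommMonoid α] [DecidableEq α]
    (s : Finset α) (x : α) : -(s.image (· + x)) = (-s).image (· + -x) := by
  simp only [← image_neg_eq_neg, image_image, Function.comp_def, neg_add]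

namespace IsRegularEntailment

variable {G : Type*} [AddCommGroup G] [Preorder G] [CovariantClass G G (· + ·) (· ≤ ·)]
  [DecidableEq G] {r : Finset G → Finset G → Prop} {C D : Finset G}

lemma pair_of_add_eq (hr : IsRegularEntailment r) {s t u v : G} (h : s + t = u + v) :
    r {s, t} {u, v} := by
  have e : s + (t - u) = v := by rw [← add_sub_assoc, h, add_sub_cancel_left]
  simpa [e] using hr.regular 0 u s (t - u)

lemma of_insert_of_insert (hr : IsRegularEntailment r) {s t u v : G} (hs : s ∈ C) (ht : t ∈ C)
    (h : s + t = u + v) (hD : D.Nonempty) (hu : r (insert u C) D) (hv : r (insert v C) D) :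
    r C D := by
  have hC : C.Nonempty := ⟨s, hs⟩
  have huv : r C (insert u (insert v D)) :=
    hr.weaken (insert_nonempty _ _) (insert_nonempty _ _) (insert_subset hs (by simpa using ht))
      (by simp [insert_subset_iff]) (hr.pair_of_add_eq h)
  have hu' : r (insert u C) (insert v D) :=
    hr.weaken (insert_nonempty _ _) hD subset_rfl (subset_insert _ _) hu
  exact hr.cut v hC hD hv (hr.cut u hC (insert_nonempty _ _) hu' huv)

lemma of_insert_of_union (hr : IsRegularEntailment r) {p : G} {Q : Finset G}
    (hQ : ∀ q ∈ Q, ∃ s ∈ C, ∃ t ∈ C, s + t = p + q) (hD : D.Nonempty)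
    (hp : r (insert p C) D) (hCQ : r (C ∪ Q) D) : r C D := by
  induction Q using Finset.induction_on generalizing C with
  | empty => simpa using hCQ
  | insert q Q _ ih =>
    obtain ⟨s, hs, t, ht, hst⟩ := hQ q (mem_insert_self q Q)
    have hq : r (insert q C) D := by
      refine ih (fun q' hq' => ?_) ?_ (by rwa [insert_union, ← union_insert])
      · obtain ⟨s, hs, t, ht, h⟩ := hQ q' (mem_insert_of_mem hq')
        exact ⟨s, mem_insert_of_mem hs, t, mem_insert_of_mem ht, h⟩
      · exact hr.weaken (insert_nonempty _ _) hD (insert_subset_insert _ (subset_insert _ _))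
          subset_rfl hp
    exact hr.of_insert_of_insert hs ht hst hD hp hq

lemma of_union_of_union (hr : IsRegularEntailment r) {P Q : Finset G}
    (hPQ : ∀ p ∈ P, ∀ q ∈ Q, ∃ s ∈ C, ∃ t ∈ C, s + t = p + q) (hD : D.Nonempty)
    (hCP : r (C ∪ P) D) (hCQ : r (C ∪ Q) D) : r C D := by
  obtain rfl | hQ := Q.eq_empty_or_nonempty
  · simpa using hCQ
  induction P using Finset.induction_on generalizing C with
  | empty => simpa using hCP
  | insert p P _ ih =>
    have hp : r (insert p C) D := by
      refine ih (fun p' hp' q hq => ?_) (by rwa [insert_union, ← union_insert]) ?_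
      · obtain ⟨s, hs, t, ht, h⟩ := hPQ p' (mem_insert_of_mem hp') q hq
        exact ⟨s, mem_insert_of_mem hs, t, mem_insert_of_mem ht, h⟩
      · exact hr.weaken (hQ.mono subset_union_right) hD
          (union_subset_union (subset_insert _ _) subset_rfl) subset_rfl hCQ
    exact hr.of_insert_of_union (hPQ p (mem_insert_self p P)) hD hp hCQ

lemma image_sub (hr : IsRegularEntailment r) {A B : Finset G} (x : G) (h : r A B) :
    r (A.image (· - x)) (B.image (· - x)) :=
  hr.translate x (by simpa only [image_image, Function.comp_def, sub_add_cancel, image_id'])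

lemma dual (hr : IsRegularEntailment r) : IsRegularEntailment (fun A B => r (-B) (-A)) where
  weaken hA hB hAA hBB h := hr.weaken hB.neg hA.neg (neg_subset_neg hBB) (neg_subset_neg hAA) h
  cut x hA hB h₁ h₂ := by
    rw [neg_insert] at h₁ h₂
    exact hr.cut (-x) hB.neg hA.neg h₂ h₁
  of_le h := by simpa only [neg_singleton] using hr.of_le (neg_le_neg_iff.mpr h)
  translate x h := by
    rw [neg_image_add_right, neg_image_add_right] at h
    exact hr.translate (-x) h
  regular a b x y := by
    simp only [neg_insert, neg_singleton]
    exact hr.pair_of_add_eq (by abel)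

lemma of_union_image_add (hr : IsRegularEntailment r) {A B : Finset G} (hA : A.Nonempty)
    (hB : B.Nonempty) {x : G} (h : r (A ∪ A.image (· + x)) B) :
    r A (B ∪ B.image (· - x)) := by
  have hD : (B ∪ B.image (· - x)).Nonempty := hB.mono subset_union_left
  have hplus : r (A ∪ A.image (· + x)) (B ∪ B.image (· - x)) :=
    hr.weaken (hA.mono subset_union_left) hB subset_rfl subset_union_left h
  have hminus : r (A ∪ A.image (· - x)) (B ∪ B.image (· - x)) := by
    have e : (A ∪ A.image (· + x)).image (· - x) = A.image (· - x) ∪ A := by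
      simp only [image_union, image_image, Function.comp_def, add_sub_cancel_right, image_id']
    refine hr.weaken ((hA.mono subset_union_left).image _) (hB.image _) ?_ subset_union_right
      (hr.image_sub x h)
    rw [e, union_comm]
  refine hr.of_union_of_union (P := A.image (· - x)) (Q := A.image (· + x)) ?_ hD hminus hplus
  simp only [mem_image]
  rintro _ ⟨a, ha, rfl⟩ _ ⟨b, hb, rfl⟩
  exact ⟨a, ha, b, hb, by abel⟩

end IsRegularEntailment

theorem regular_entailment_shift_iff {G : Type*} [AddCommGroup G] [Preorder G]
    [CovariantClass G G (· + ·) (· ≤ ·)] [DecidableEq G]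
    (r : Finset G → Finset G → Prop) (hr : IsRegularEntailment r)
    (A B : Finset G) (hA : A.Nonempty) (hB : B.Nonempty) (x : G) :
    r (A ∪ A.image (· + x)) B ↔ r A (B ∪ B.image (· - x)) := by
  refine ⟨hr.of_union_image_add hA hB, fun h => ?_⟩
  have := hr.dual.of_union_image_add hB.neg hA.neg (x := x)
    (by simpa only [neg_union, neg_image_add_right, neg_neg, sub_eq_add_neg] using h)
  simpa only [neg_union, neg_image_add_right, neg_neg, sub_eq_add_neg] using this
end

section
/- Let ⊢ be a regular entailment relation on a preordered commutative group G. If 0 ≤ p ≤ q are natural numbers, then {a, a + q·x} ⊢ {a + p·x} for all a, x in G. -/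
/-!
Write `P(m, k)` for `{a, a + (m + k)•x} ⊢ {a + m•x}` (all `a`, `x`). Regularity gives
`{a, a + (m + k)•x} ⊢ {a + k•x, a + m•x}`, and cutting this at `a + k•x` against
`{a, a + k•x} ⊢ {a + m•x}` shows `P(m, k) → P(m, m + k)`. Reading the same pair from the
other end (base point `a + (m + k)•x`, step `-x`) shows `P(m, k) ↔ P(k, m)`. Together these
run the subtractive Euclidean algorithm on `(m, k)` down to `m = 0` or `k = 0`, where the
conclusion is a member of the premises.
-/

open Finset Pointwise

namespace IsRegularEntailment

variable {G : Type*} [AddCommGroup G] [DecidableEq G] {r : Finset G → Finset G → Prop}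

theorem pair_nsmul_swap {m k : ℕ} (h : ∀ a x : G, r {a, a + (m + k) • x} {a + m • x})
    (a x : G) : r {a, a + (k + m) • x} {a + k • x} := by
  have hA : ({a + (k + m) • x, a + (k + m) • x + (m + k) • -x} : Finset G) =
      {a, a + (k + m) • x} := by
    rw [pair_comm, smul_neg, add_comm m k, add_neg_cancel_right]
  have hb : a + (k + m) • x + m • -x = a + k • x := by
    rw [smul_neg, add_nsmul]; abel
  simpa only [hA, hb] using h (a + (k + m) • x) (-x)

variable [Preorder G] [CovariantClass G G (· + ·) (· ≤ ·)]

theorem of_mem (hr : IsRegularEntailment r) {A : Finset G} {b : G} (hb : b ∈ A) : r A {b} :=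
  hr.weaken (singleton_nonempty b) (singleton_nonempty b) (singleton_subset_iff.mpr hb) subset_rfl
    (hr.of_le le_rfl)

theorem pair_nsmul_of_pair_nsmul (hr : IsRegularEntailment r) (a x : G) (m k : ℕ)
    (h : r {a, a + k • x} {a + m • x}) : r {a, a + (m + k) • x} {a + m • x} := by
  have hsplit : r {a, a + (m + k) • x} {a + k • x, a + m • x} := by
    have hsum : k • x + (a + m • x) = a + (m + k) • x := by rw [add_nsmul]; abel
    simpa only [add_zero, zero_add, hsum] using hr.regular a (k • x) 0 (a + m • x)
  refine hr.cut (a + k • x) (insert_nonempty _ _) (singleton_nonempty _) ?_ hsplit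
  exact hr.weaken (insert_nonempty _ _) (singleton_nonempty _) (by simp [insert_subset_iff])
    subset_rfl h

theorem pair_nsmul (hr : IsRegularEntailment r) : ∀ m k : ℕ, ∀ a x : G,
    r {a, a + (m + k) • x} {a + m • x}
  | 0, k, a, x => hr.of_mem (by simp)
  | m, 0, a, x => hr.of_mem (by simp)
  | m + 1, k + 1, a, x => by
    rcases le_total (m + 1) (k + 1) with hmk | hkm
    · obtain ⟨j, hj⟩ := Nat.exists_eq_add_of_le hmk
      rw [hj]
      exact hr.pair_nsmul_of_pair_nsmul a x _ _ (hr.pair_nsmul (m + 1) j a x)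
    · obtain ⟨j, hj⟩ := Nat.exists_eq_add_of_le hkm
      rw [hj]
      exact pair_nsmul_swap (fun a x ↦ hr.pair_nsmul_of_pair_nsmul a x _ _
        (hr.pair_nsmul (k + 1) j a x)) a x
termination_by m k => m + k

end IsRegularEntailment

theorem regular_entailment_convexity {G : Type*} [AddCommGroup G] [Preorder G]
    [CovariantClass G G (· + ·) (· ≤ ·)] [DecidableEq G]
    (r : Finset G → Finset G → Prop) (hr : IsRegularEntailment r)
    (p q : ℕ) (hpq : p ≤ q) (a x : G) :
    r {a, a + q • x} {a + p • x} := by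
  obtain ⟨k, rfl⟩ := Nat.exists_eq_add_of_le hpq
  exact hr.pair_nsmul p k a x
end

section
/- Let ⊢ be a regular entailment relation on a preordered commutative group G. Then A ⊢ {b₁, ..., bₘ} if and only if (A - b₁) ∪ (A - b₂) ∪ ... ∪ (A - bₘ) ⊢ {0}. -/
open Finset Pointwise

namespace IsRegularEntailment

variable {G : Type*} [AddCommGroup G] [Preorder G] [CovariantClass G G (· + ·) (· ≤ ·)]
  [DecidableEq G] {r : Finset G → Finset G → Prop}

theorem translate_iff (hr : IsRegularEntailment r) (x : G) {A B : Finset G} :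
    r (A.image (· + x)) (B.image (· + x)) ↔ r A B := by
  refine ⟨hr.translate x, fun h => hr.translate (-x) ?_⟩
  simpa only [image_image, Function.comp_def, add_neg_cancel_right, image_id'] using h

theorem regular_shift (hr : IsRegularEntailment r) (z w v : G) : r {z, w + v} {w, v + z} := by
  have h := hr.regular (w - v) v (z - w + v) w
  rwa [show w - v + (z - w + v) = z by abel, add_comm v w, sub_add_cancel,
    show z - w + v + w = v + z by abel] at h

theorem insert_add_left (hr : IsRegularEntailment r) {X Y : Finset G} {z v w : G}
    (hz : z ∈ X) (hvz : v + z ∈ Y) (h : r (insert w X) Y) : r (insert (w + v) X) Y := by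
  refine hr.cut w (insert_nonempty _ _) ⟨_, hvz⟩ ?_ ?_
  · exact hr.weaken (insert_nonempty _ _) ⟨_, hvz⟩
      (insert_subset_insert _ (subset_insert _ _)) subset_rfl h
  · exact hr.weaken (insert_nonempty _ _) (insert_nonempty _ _)
      (by simp [insert_subset_iff, hz]) (by simp [insert_subset_iff, hvz]) (hr.regular_shift z w v)

theorem insert_add_right (hr : IsRegularEntailment r) {X Y : Finset G} {u w : G}
    (hu : u ∈ X) (h0 : 0 ∈ Y) (h : r X (insert w Y)) : r X (insert (w + u) Y) := by
  refine hr.cut w ⟨_, hu⟩ (insert_nonempty _ _) ?_ ?_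
  · have hreg := hr.regular_shift w 0 u
    rw [zero_add, add_comm u w] at hreg
    exact hr.weaken (insert_nonempty _ _) (insert_nonempty _ _)
      (by simp [insert_subset_iff, hu]) (by simp [insert_subset_iff, h0]) hreg
  · exact hr.weaken ⟨_, hu⟩ (insert_nonempty _ _) subset_rfl
      (insert_subset_insert _ (subset_insert _ _)) h

theorem union_image_add_left (hr : IsRegularEntailment r) {Y : Finset G} {z v : G}
    (hvz : v + z ∈ Y) (W : Finset G) {X : Finset G} (hz : z ∈ X) (h : r (X ∪ W) Y) :
    r (X ∪ W.image (· + v)) Y := by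
  induction W using Finset.induction_on generalizing X with
  | empty => simpa using h
  | insert w W _ ih =>
    rw [union_insert] at h
    rw [image_insert, union_insert, ← insert_union]
    refine ih (mem_insert_of_mem hz) ?_
    rw [insert_union]
    exact hr.insert_add_left (mem_union_left _ hz) hvz h

theorem union_image_add_right (hr : IsRegularEntailment r) {X : Finset G} {u : G}
    (hu : u ∈ X) (W : Finset G) {Y : Finset G} (h0 : 0 ∈ Y) (h : r X (Y ∪ W)) :
    r X (Y ∪ W.image (· + u)) := by
  induction W using Finset.induction_on generalizing Y with
  | empty => simpa using h
  | insert w W _ ih =>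
    rw [union_insert] at h
    rw [image_insert, union_insert, ← insert_union]
    refine ih (mem_insert_of_mem h0) ?_
    rw [insert_union]
    exact hr.insert_add_right hu (mem_union_left _ h0) h

theorem cut_union_left (hr : IsRegularEntailment r) {X Y : Finset G} (hX : X.Nonempty)
    (hY : Y.Nonempty) (S : Finset G) (h : r (X ∪ S) Y) (hS : ∀ t ∈ S, r X (insert t Y)) :
    r X Y := by
  induction S using Finset.induction_on with
  | empty => simpa using h
  | insert t S _ ih =>
    rw [union_insert] at h
    refine ih (hr.cut t (hX.mono subset_union_left) hY h ?_) fun t' ht' =>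
      hS t' (mem_insert_of_mem ht')
    exact hr.weaken hX (insert_nonempty _ _) subset_union_left subset_rfl
      (hS t (mem_insert_self _ _))

theorem cut_union_right (hr : IsRegularEntailment r) {X Y : Finset G} (hX : X.Nonempty)
    (hY : Y.Nonempty) (S : Finset G) (h : r X (Y ∪ S)) (hS : ∀ t ∈ S, r (insert t X) Y) :
    r X Y := by
  induction S using Finset.induction_on with
  | empty => simpa using h
  | insert t S _ ih =>
    rw [union_insert] at h
    refine ih (hr.cut t hX (hY.mono subset_union_left) ?_ h) fun t' ht' =>
      hS t' (mem_insert_of_mem ht')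
    exact hr.weaken (insert_nonempty _ _) hY subset_rfl subset_union_left
      (hS t (mem_insert_self _ _))

theorem erase_image_sub (hr : IsRegularEntailment r) {X D : Finset G} (hX : X.Nonempty)
    {d₁ d : G} (hd₁ : d₁ ∈ D) (hd : d ∈ D.erase d₁) (h₁ : r X (D.image (· - d₁)))
    (h : r X (D.image (· - d))) : r X ((D.erase d₁).image (· - d)) := by
  have hsplit : ∀ c, D.image (· - c) = insert (d₁ - c) ((D.erase d₁).image (· - c)) :=
    fun c => by rw [← image_insert (f := (· - c)) (a := d₁), insert_erase hd₁]
  have hzero : 0 ∈ (D.erase d₁).image (· - d) := sub_self d ▸ mem_image_of_mem _ hd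
  refine hr.cut (d₁ - d) hX ⟨0, hzero⟩ ?_ (by rwa [← hsplit])
  rw [hsplit, sub_self, insert_eq] at h₁
  have h₁' := hr.union_image_add_right (mem_insert_self (d₁ - d) X) _ (mem_singleton_self 0)
    (hr.weaken hX ⟨0, mem_union_left _ (mem_singleton_self 0)⟩ (subset_insert _ _) subset_rfl h₁)
  rwa [image_image, show ((· + (d₁ - d)) ∘ (· - d₁)) = (· - d) from
    funext fun c => sub_add_sub_cancel c d₁ d, union_eq_right.2 (singleton_subset_iff.2 hzero)]
    at h₁'

theorem singleton_zero_of_forall_image_sub (hr : IsRegularEntailment r) {D X : Finset G}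
    (hD : D.Nonempty) (hX : X.Nonempty) (h : ∀ d ∈ D, r X (D.image (· - d))) : r X {0} := by
  -- Cut `X ⊢ {0} ∪ (D.erase d₀ - d₀)` on each `d₁ - d₀`; once `d₁ - d₀` is on the left,
  -- `erase_image_sub` gives the same situation for `D.erase d₁`.
  induction D using Finset.strongInduction generalizing X with
  | H D ih =>
  obtain ⟨d₀, hd₀⟩ := hD
  refine hr.cut_union_right hX (singleton_nonempty 0) ((D.erase d₀).image (· - d₀)) ?_ ?_
  · have h₀ := h d₀ hd₀
    rwa [← insert_erase hd₀, image_insert, sub_self, insert_eq] at h₀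
  · intro t ht
    obtain ⟨d₁, hd₁, rfl⟩ := mem_image.1 ht
    have hd₁D := mem_of_mem_erase hd₁
    have h' : ∀ c ∈ D, r (insert (d₁ - d₀) X) (D.image (· - c)) := fun c hc =>
      hr.weaken hX ⟨c - c, mem_image_of_mem (· - c) hc⟩ (subset_insert _ _) subset_rfl (h c hc)
    exact ih _ (erase_ssubset hd₁D) ⟨d₀, mem_erase.2 ⟨(ne_of_mem_erase hd₁).symm, hd₀⟩⟩
      (insert_nonempty _ _) fun d hd =>
        hr.erase_image_sub (insert_nonempty _ _) hd₁D hd (h' d₁ hd₁D) (h' d (mem_of_mem_erase hd))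

theorem erase_biUnion_image_add (hr : IsRegularEntailment r) {A D Y : Finset G} (hY : Y.Nonempty)
    {d₀ d₁ d a : G} (hd₀ : d₀ ∈ D) (hd₁ : d₁ ∈ D.erase d₀) (hd : d ∈ D.erase d₀) (ha : a ∈ A)
    (h : r (D.biUnion fun d' => A.image (· + (d - d'))) Y) :
    r ((D.erase d₀).biUnion fun d' => A.image (· + (d - d'))) (insert (a + (d₀ - d₁)) Y) := by
  have haJ : a ∈ (D.erase d₀).biUnion fun d' => A.image (· + (d - d')) :=
    mem_biUnion.2 ⟨d, hd, mem_image.2 ⟨a, ha, by rw [sub_self, add_zero]⟩⟩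
  rw [← insert_erase hd₀, biUnion_insert, union_comm] at h
  have hshift : d₀ - d₁ + a ∈ insert (a + (d₀ - d₁)) Y :=
    add_comm a (d₀ - d₁) ▸ mem_insert_self _ _
  have h' := hr.union_image_add_left hshift _ haJ
    (hr.weaken ⟨a, mem_union_left _ haJ⟩ hY subset_rfl (subset_insert _ _) h)
  rwa [image_image, show ((· + (d₀ - d₁)) ∘ (· + (d - d₀))) = (· + (d - d₁)) from
      funext fun c => by simp only [Function.comp_apply, add_assoc, sub_add_sub_cancel],
    union_eq_left.2 (subset_biUnion_of_mem (fun d' => A.image (· + (d - d'))) hd₁)] at h'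

theorem of_forall_biUnion_image_add (hr : IsRegularEntailment r) {A D Y : Finset G}
    (hD : D.Nonempty) (hA : A.Nonempty) (hY : Y.Nonempty)
    (h : ∀ d ∈ D, r (D.biUnion fun d' => A.image (· + (d - d'))) Y) : r A Y := by
  -- At `d₀` the hypothesis reads `A ∪ J ⊢ Y`; cutting on each `t ∈ J` leaves `A ⊢ Y, t`, and
  -- `erase_biUnion_image_add` gives the same situation for `D.erase d₀`.
  induction D using Finset.strongInduction generalizing Y with
  | H D ih =>
  obtain ⟨d₀, hd₀⟩ := hD
  refine hr.cut_union_left hA hY ((D.erase d₀).biUnion fun d₁ => A.image (· + (d₀ - d₁))) ?_ ?_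
  · have h₀ := h d₀ hd₀
    rw [← insert_erase hd₀, biUnion_insert] at h₀
    simpa only [sub_self, add_zero, image_id'] using h₀
  · intro t ht
    simp only [mem_biUnion, mem_image] at ht
    obtain ⟨d₁, hd₁, a, ha, rfl⟩ := ht
    exact ih _ (erase_ssubset hd₀) ⟨d₁, hd₁⟩ (insert_nonempty _ _) fun d hd =>
      hr.erase_biUnion_image_add hY hd₀ hd₁ hd ha (h d (mem_of_mem_erase hd))

end IsRegularEntailment

theorem regular_entailment_reduce_right {G : Type*} [AddCommGroup G] [Preorder G]
    [CovariantClass G G (· + ·) (· ≤ ·)] [DecidableEq G]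
    (r : Finset G → Finset G → Prop) (hr : IsRegularEntailment r)
    (A B : Finset G) (hA : A.Nonempty) (hB : B.Nonempty) :
    r A B ↔ r (B.biUnion (fun b => A.image (fun a => a - b))) {0} := by
  constructor
  · intro h
    refine hr.singleton_zero_of_forall_image_sub hB (hB.biUnion fun b _ => hA.image _)
      fun d hd => ?_
    have h' := (hr.translate_iff (-d)).2 h
    simp only [← sub_eq_add_neg] at h'
    exact hr.weaken (hA.image _) (hB.image _)
      (subset_biUnion_of_mem (fun b => A.image (· - b)) hd) subset_rfl h'
  · intro h
    refine hr.of_forall_biUnion_image_add hB hA hB fun d hd => ?_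
    have h' := (hr.translate_iff d).2 h
    have hshift : ∀ b, (· + d) ∘ (· - b) = (· + (d - b)) := fun b =>
      funext fun a => by simp only [Function.comp_apply]; abel
    simp only [image_singleton, zero_add, biUnion_image, image_image, hshift] at h'
    exact hr.weaken (hB.biUnion fun b _ => hA.image _) (singleton_nonempty d) subset_rfl
      (singleton_subset_iff.2 hd) h'
end

section
/- Let ⊢ be a regular entailment relation on a preordered commutative group G. If a₁ + a₂ + ... + aₙ = 0 in G, then {a₁, ..., aₙ} ⊢ {0}. -/
open Finset Pointwise

/-!
Regularity with `x = y = 0` gives `{a, b} ⊢ {a + b, 0}`, so cutting on `a + b` lets two hypotheses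
`a, b` be replaced by their sum whenever the conclusion contains `0`. Merging the summands one by
one reduces `{a₁, …, aₙ} ⊢ {0}` to `{a₁ + ⋯ + aₙ} ⊢ {0}`, i.e. to `{0} ⊢ {0}`.
-/

namespace IsRegularEntailment

variable {G : Type*} [AddCommGroup G] [Preorder G] [CovariantClass G G (· + ·) (· ≤ ·)]
  [DecidableEq G] {r : Finset G → Finset G → Prop}

theorem pair_add_zero (hr : IsRegularEntailment r) (a b : G) : r {a, b} {a + b, 0} := by
  simpa using hr.regular a b 0 0

theorem of_insert_add {A B : Finset G} {a b : G} (hr : IsRegularEntailment r)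
    (ha : a ∈ A) (hb : b ∈ A) (h0 : (0 : G) ∈ B) (h : r (insert (a + b) A) B) : r A B := by
  have hpair : r A (insert (a + b) B) :=
    hr.weaken (insert_nonempty a {b}) (insert_nonempty _ {0})
      (insert_subset ha (singleton_subset_iff.2 hb))
      (insert_subset_insert _ (singleton_subset_iff.2 h0)) (hr.pair_add_zero a b)
  exact hr.cut (a + b) ⟨a, ha⟩ ⟨0, h0⟩ h hpair

theorem list_toFinset_zero_of_sum_eq_zero (hr : IsRegularEntailment r) :
    ∀ l : List G, l ≠ [] → l.sum = 0 → r l.toFinset {0}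
  | [], hl, _ => absurd rfl hl
  | [a], _, hsum => by
    obtain rfl : a = 0 := by simpa using hsum
    simpa using hr.of_le le_rfl
  | a :: b :: t, _, hsum => by
    have hmerged : r ((a + b) :: t).toFinset {0} :=
      list_toFinset_zero_of_sum_eq_zero hr _ (List.cons_ne_nil _ _)
        (by simpa [add_assoc] using hsum)
    refine hr.of_insert_add (a := a) (b := b) (by simp) (by simp) (mem_singleton_self 0) ?_
    refine hr.weaken ⟨a + b, by simp⟩ (singleton_nonempty 0) ?_ Subset.rfl hmerged
    simp only [List.toFinset_cons]
    exact insert_subset_insert _ ((subset_insert _ _).trans (subset_insert _ _))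

end IsRegularEntailment

theorem regular_entailment_sum_zero {G : Type*} [AddCommGroup G] [Preorder G]
    [CovariantClass G G (· + ·) (· ≤ ·)] [DecidableEq G]
    (r : Finset G → Finset G → Prop) (hr : IsRegularEntailment r)
    (n : ℕ) (hn : 0 < n) (a : Fin n → G) (h : ∑ i, a i = 0) :
    r (Finset.image a Finset.univ) {0} := by
  have hne : List.ofFn a ≠ [] := by simpa [List.ofFn_eq_nil_iff] using hn.ne'
  have hsum : (List.ofFn a).sum = 0 := by rwa [List.sum_ofFn]
  have himage : (List.ofFn a).toFinset = Finset.image a Finset.univ := by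
    ext z
    simp [List.mem_ofFn]
  simpa [himage] using hr.list_toFinset_zero_of_sum_eq_zero _ hne hsum
end

section
/- Let ⊢ be a regular entailment relation on a preordered commutative group G. If a₁ + ... + aₙ = b₁ + ... + bₙ in G, then {a₁, ..., aₙ} ⊢ {b₁, ..., bₙ}. -/
open Finset Pointwise

/-
Induction on the length. Put x = a₀ + a₁ - b₀. Regularity gives {a₀, a₁} ⊢ {b₀, x}, and the
tuples (x, a₂, …, aₙ) and (b₁, …, bₙ) are shorter with equal sums, so by induction
{x, a₂, …} ⊢ {b₁, …}. After weakening, these are the two premises of a cut on x.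
-/

theorem Finset.image_univ_finCons {α : Type*} [DecidableEq α] {n : ℕ} (x : α) (f : Fin n → α) :
    univ.image (Fin.cons x f : Fin (n + 1) → α) = insert x (univ.image f) :=
  coe_injective <| by simp [Fin.range_cons]

theorem Finset.image_univ_comp_subset {α β γ : Type*} [DecidableEq α] [Fintype β] [Fintype γ]
    (f : β → α) (g : γ → β) : univ.image (f ∘ g) ⊆ univ.image f := by
  simpa only [← coe_subset, coe_image, coe_univ, Set.image_univ] using
    Set.range_comp_subset_range g f

namespace IsRegularEntailment

variable {G : Type*} [AddCommGroup G] [Preorder G] [CovariantClass G G (· + ·) (· ≤ ·)]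
  [DecidableEq G] {r : Finset G → Finset G → Prop}

theorem exchange (hr : IsRegularEntailment r) (u v c : G) : r {u, v} {c, u + v - c} := by
  simpa [sub_add_eq_add_sub] using hr.regular c 0 (u - c) v

theorem image_univ_of_sum_eq (hr : IsRegularEntailment r) :
    ∀ {n : ℕ} (a b : Fin (n + 1) → G), ∑ i, a i = ∑ i, b i → r (univ.image a) (univ.image b)
  | 0, a, b, h => by
    rw [Fin.sum_univ_one, Fin.sum_univ_one] at h
    simpa [univ_unique] using hr.of_le h.le
  | n + 1, a, b, h => by
    set x := a 0 + a 1 - b 0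
    have hsum : ∑ i, (Fin.cons x (Fin.tail (Fin.tail a)) : Fin (n + 1) → G) i =
        ∑ i, Fin.tail b i := by
      rw [Fin.sum_univ_succ, Fin.sum_univ_succ, Fin.succ_zero_eq_one,
        Fin.sum_univ_succ (f := b)] at h
      simp only [Fin.sum_cons, Fin.tail, x]
      rw [eq_sub_of_add_eq' h.symm]
      abel
    have hleft : r (insert x (univ.image a)) (univ.image b) := by
      refine hr.weaken (univ_nonempty.image _) (univ_nonempty.image _) ?_
        (image_univ_comp_subset b Fin.succ) (image_univ_of_sum_eq hr _ _ hsum)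
      rw [image_univ_finCons]
      exact insert_subset_insert x (image_univ_comp_subset a (Fin.succ ∘ Fin.succ))
    have hright : r (univ.image a) (insert x (univ.image b)) := by
      refine hr.weaken (insert_nonempty _ _) (insert_nonempty _ _) ?_ ?_
        (hr.exchange (a 0) (a 1) (b 0))
      · exact insert_subset_iff.2 ⟨mem_image_of_mem a (mem_univ 0),
          singleton_subset_iff.2 (mem_image_of_mem a (mem_univ 1))⟩
      · rw [pair_comm]
        exact insert_subset_insert x (singleton_subset_iff.2 (mem_image_of_mem b (mem_univ 0)))
    exact hr.cut x (univ_nonempty.image a) (univ_nonempty.image b) hleft hright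

end IsRegularEntailment

theorem regular_entailment_sum_eq {G : Type*} [AddCommGroup G] [Preorder G]
    [CovariantClass G G (· + ·) (· ≤ ·)] [DecidableEq G]
    (r : Finset G → Finset G → Prop) (hr : IsRegularEntailment r)
    (n : ℕ) (hn : 0 < n) (a b : Fin n → G) (h : ∑ i, a i = ∑ i, b i) :
    r (Finset.image a Finset.univ) (Finset.image b Finset.univ) := by
  obtain ⟨m, rfl⟩ := Nat.exists_eq_add_one_of_ne_zero hn.ne'
  exact hr.image_univ_of_sum_eq a b h
end

section
/- Let G be a preordered commutative group and R a predicate on nonempty finite subsets of G satisfying: (P1) R(A) if R(A') and A' ⊆ A; (P2) R(A + B) if R((A + B) ∪ A) and R((A + B) ∪ B) (cut); (P3) R({a}) if a ≤ 0; (P5) R({x, -x}) for all x. Then the relation A ⊢ B defined by R(A - B) is a regular entailment relation on G. -/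
open Finset Pointwise

namespace Finset

variable {G : Type*} [AddCommGroup G] [DecidableEq G]

theorem add_singleton_sub_add_singleton (A B : Finset G) (x : G) :
    (A + {x}) - (B + {x}) = A - B := by
  rw [← sub_add_sub_comm, singleton_sub_singleton, sub_self, singleton_zero, add_zero]

theorem image_add_right_sub_image_add_right (A B : Finset G) (x : G) :
    A.image (· + x) - B.image (· + x) = A - B := by
  rw [← image₂_singleton_right, ← image₂_singleton_right]
  exact add_singleton_sub_add_singleton A B x

theorem singleton_sub_add_sub_singleton (A B : Finset G) (x : G) :
    ({x} - B) + (A - {x}) = A - B := by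
  rw [sub_add_sub_comm, add_comm {x} A, add_singleton_sub_add_singleton]

end Finset

theorem regular_entailment_of_predicate {G : Type*} [AddCommGroup G] [Preorder G]
    [CovariantClass G G (· + ·) (· ≤ ·)] [DecidableEq G]
    (R : Finset G → Prop)
    (P1 : ∀ A A' : Finset G, A'.Nonempty → A' ⊆ A → R A' → R A)
    (P2 : ∀ A B : Finset G, A.Nonempty → B.Nonempty →
      R ((A + B) ∪ A) → R ((A + B) ∪ B) → R (A + B))
    (P3 : ∀ a : G, a ≤ 0 → R {a})
    (P5 : ∀ x : G, R {x, -x}) :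
    IsRegularEntailment (fun A B : Finset G => R (A - B)) := by
  refine ⟨fun hA' hB' hA hB h => P1 _ _ (hA'.sub hB') (sub_subset_sub hA hB) h, ?cut, ?of_le,
    fun x h => by rwa [image_add_right_sub_image_add_right] at h, ?regular⟩
  case cut =>
    intro A B x hA hB hxA hxB
    -- Cutting `x` splits each difference `a - b` as `(x - b) + (a - x)`.
    rw [← singleton_sub_add_sub_singleton A B x]
    refine P2 _ _ ((singleton_nonempty x).sub hB) (hA.sub (singleton_nonempty x)) ?_ ?_
    · rwa [singleton_sub_add_sub_singleton, union_comm, ← union_sub, ← insert_eq]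
    · rwa [singleton_sub_add_sub_singleton, union_comm, ← sub_union, ← insert_eq]
  case of_le =>
    intro a b hab
    rw [singleton_sub_singleton]
    exact P3 _ (sub_nonpos.2 hab)
  case regular =>
    intro a b x y
    have hsub : ({x - b, -(x - b)} : Finset G) ⊆ {a + x, b + y} - {a + b, x + y} := by
      rw [insert_subset_iff, singleton_subset_iff, mem_sub, mem_sub]
      exact ⟨⟨a + x, by simp, a + b, by simp, by abel⟩, ⟨b + y, by simp, x + y, by simp, by abel⟩⟩
    exact P1 _ _ (insert_nonempty _ _) hsub (P5 (x - b))
end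

section
/- Let S be an equivariant system of ideals on a preordered commutative group G, and let T_x(S) be the least equivariant system of ideals Q containing S such that Q({x}) holds (i.e., {x} ▷_Q 0). Then T_x(S)(A) holds if and only if there exists a natural number k ≥ 0 such that S(A ∪ (A - x) ∪ (A - 2x) ∪ ... ∪ (A - kx)). -/
open Finset Pointwise

/-- An equivariant system of ideals on a preordered commutative group,
presented as a predicate on (nonempty) finite subsets. -/
structure IsIdealSystem {G : Type*} [AddCommGroup G] [Preorder G]
    [CovariantClass G G (· + ·) (· ≤ ·)] [DecidableEq G]
    (S : Finset G → Prop) : Prop where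
  p1 : ∀ {A A' : Finset G}, A'.Nonempty → A' ⊆ A → S A' → S A
  p2' : ∀ {A : Finset G} (u : G), A.Nonempty →
    S (insert u A) → S (A.image (fun a => a - u)) → S A
  p3 : ∀ {a : G}, a ≤ 0 → S {a}

/-!
Everything rests on a cut rule: iterating (P'2) and weakening by (P1), `S (C ∪ F)` yields `S C`
as soon as `S (C - v)` holds for every `v ∈ F`.

Given `T {x}`, cutting the layer `A - (k+1)x` off `A ∪ ⋯ ∪ (A - (k+1)x)` is legitimate because
every translate `(A ∪ ⋯ ∪ (A - kx)) - (a - (k+1)x)` contains `x`; so the condition implies `T A`.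
Conversely, the sets satisfying the condition form an ideal system containing `S` and `{x}`, so
minimality of `T` gives the other implication. Its (P'2) is again a cut: remove the points
`u - nx`, `n ≤ k₁`, from the `k₁`-union of `insert u A`, using that the translate of the
`(k₁ + k₂)`-union of `A` by `u - nx` contains the `k₂`-union of `A - u`.
-/

section

variable {G : Type*} [AddCommGroup G] [DecidableEq G]

def shiftUnion (x : G) (k : ℕ) (A : Finset G) : Finset G :=
  (range (k + 1)).biUnion fun j => A.image (· - j • x)

theorem mem_shiftUnion {x c : G} {k : ℕ} {A : Finset G} :
    c ∈ shiftUnion x k A ↔ ∃ j ≤ k, ∃ a ∈ A, a - j • x = c := by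
  simp [shiftUnion]

theorem shiftUnion_zero (x : G) (A : Finset G) : shiftUnion x 0 A = A := by
  simp [shiftUnion]

theorem shiftUnion_succ (x : G) (k : ℕ) (A : Finset G) :
    shiftUnion x (k + 1) A = shiftUnion x k A ∪ A.image (· - (k + 1) • x) := by
  rw [shiftUnion, range_add_one, biUnion_insert, union_comm, shiftUnion]

theorem Finset.Nonempty.shiftUnion {A : Finset G} (hA : A.Nonempty) (x : G) (k : ℕ) :
    (shiftUnion x k A).Nonempty := by
  obtain ⟨a, ha⟩ := hA
  exact ⟨a, mem_shiftUnion.2 ⟨0, k.zero_le, a, ha, by simp⟩⟩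

theorem shiftUnion_mono {x : G} {k : ℕ} {A B : Finset G} (h : A ⊆ B) :
    shiftUnion x k A ⊆ shiftUnion x k B :=
  biUnion_mono fun _ _ => image_subset_image h

def forcing (S : Finset G → Prop) (x : G) (A : Finset G) : Prop :=
  ∃ k, S (shiftUnion x k A)

theorem le_forcing (S : Finset G → Prop) (x : G) : S ≤ forcing S x :=
  fun A h => ⟨0, by rwa [shiftUnion_zero]⟩

end

section

variable {G : Type*} [AddCommGroup G] [Preorder G] [CovariantClass G G (· + ·) (· ≤ ·)]
  [DecidableEq G]

theorem IsIdealSystem.of_union {S : Finset G → Prop} (hS : IsIdealSystem S) {C F : Finset G}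
    (hC : C.Nonempty) (hF : ∀ v ∈ F, S (C.image (· - v))) (h : S (C ∪ F)) : S C := by
  induction F using Finset.induction_on with
  | empty => simpa using h
  | insert v F _ ih =>
    refine ih (fun w hw => hF w (mem_insert_of_mem hw)) (hS.p2' v (hC.mono subset_union_left) ?_ ?_)
    · rwa [← union_insert]
    · exact hS.p1 (hC.image _) (image_subset_image subset_union_left) (hF v (mem_insert_self v F))

theorem IsIdealSystem.of_shiftUnion {T : Finset G → Prop} (hT : IsIdealSystem T) {x : G}
    (hTx : T {x}) {A : Finset G} (hA : A.Nonempty) (k : ℕ) (h : T (shiftUnion x k A)) : T A := by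
  induction k with
  | zero => rwa [shiftUnion_zero] at h
  | succ k ih =>
    rw [shiftUnion_succ] at h
    refine ih (hT.of_union (hA.shiftUnion x k) ?_ h)
    rintro _ hv
    obtain ⟨a, ha, rfl⟩ := mem_image.1 hv
    have hx : x ∈ (shiftUnion x k A).image (· - (a - (k + 1) • x)) :=
      mem_image.2 ⟨a - k • x, mem_shiftUnion.2 ⟨k, le_rfl, a, ha, rfl⟩, by rw [succ_nsmul]; abel⟩
    exact hT.p1 (singleton_nonempty x) (singleton_subset_iff.2 hx) hTx

theorem IsIdealSystem.shiftUnion_add_of_insert_of_image {S : Finset G → Prop}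
    (hS : IsIdealSystem S) {x u : G} {A : Finset G} (hA : A.Nonempty) {k₁ k₂ : ℕ} (h₁ : S (shiftUnion x k₁ (insert u A)))
    (h₂ : S (shiftUnion x k₂ (A.image (· - u)))) : S (shiftUnion x (k₁ + k₂) A) := by
  refine hS.of_union (F := (range (k₁ + 1)).image (u - · • x)) (hA.shiftUnion x _) ?_ ?_
  · rintro _ hv
    obtain ⟨n, hn, rfl⟩ := mem_image.1 hv
    refine hS.p1 ((hA.image _).shiftUnion x k₂) (fun c hc => ?_) h₂
    obtain ⟨i, hi, _, hb, rfl⟩ := mem_shiftUnion.1 hc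
    obtain ⟨a, ha, rfl⟩ := mem_image.1 hb
    have hni : n + i ≤ k₁ + k₂ := by rw [mem_range] at hn; omega
    exact mem_image.2 ⟨a - (n + i) • x, mem_shiftUnion.2 ⟨n + i, hni, a, ha, rfl⟩,
      by rw [add_nsmul]; abel⟩
  · refine hS.p1 ((insert_nonempty u A).shiftUnion x k₁) (fun c hc => ?_) h₁
    obtain ⟨j, hj, b, hb, rfl⟩ := mem_shiftUnion.1 hc
    rcases mem_insert.1 hb with rfl | hb
    · exact mem_union_right _ (mem_image.2 ⟨j, mem_range.2 (Nat.lt_succ_of_le hj), rfl⟩)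
    · exact mem_union_left _ (mem_shiftUnion.2 ⟨j, by omega, b, hb, rfl⟩)

theorem isIdealSystem_forcing {S : Finset G → Prop} (hS : IsIdealSystem S) (x : G) :
    IsIdealSystem (forcing S x) where
  p1 hA' hsub := fun ⟨k, h⟩ => ⟨k, hS.p1 (hA'.shiftUnion x k) (shiftUnion_mono hsub) h⟩
  p2' _ hA := fun ⟨k₁, h₁⟩ ⟨k₂, h₂⟩ => ⟨k₁ + k₂, hS.shiftUnion_add_of_insert_of_image hA h₁ h₂⟩
  p3 ha := ⟨0, by rw [shiftUnion_zero]; exact hS.p3 ha⟩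

theorem IsIdealSystem.forcing_singleton {S : Finset G → Prop} (hS : IsIdealSystem S) (x : G) :
    forcing S x {x} := by
  have h0 : 0 ∈ shiftUnion x 1 {x} := mem_shiftUnion.2 ⟨1, le_rfl, x, mem_singleton_self x, by simp⟩
  exact ⟨1, hS.p1 (singleton_nonempty 0) (singleton_subset_iff.2 h0) (hS.p3 le_rfl)⟩

end

theorem forcing_ideal_system_characterization {G : Type*} [AddCommGroup G] [Preorder G]
    [CovariantClass G G (· + ·) (· ≤ ·)] [DecidableEq G]
    (S : Finset G → Prop) (hS : IsIdealSystem S) (x : G)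
    (T : Finset G → Prop) (hT : IsIdealSystem T)
    (hST : ∀ A : Finset G, A.Nonempty → S A → T A)
    (hTx : T {x})
    (hleast : ∀ Q : Finset G → Prop, IsIdealSystem Q →
      (∀ A : Finset G, A.Nonempty → S A → Q A) → Q {x} →
      ∀ A : Finset G, A.Nonempty → T A → Q A) :
    ∀ A : Finset G, A.Nonempty →
      (T A ↔ ∃ k : ℕ,
        S ((Finset.range (k + 1)).biUnion (fun j => A.image (fun a => a - j • x)))) := by
  intro A hA
  constructor
  · exact hleast _ (isIdealSystem_forcing hS x) (fun A _ => le_forcing S x A)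
      (hS.forcing_singleton x) A hA
  · rintro ⟨k, h⟩
    exact hT.of_shiftUnion hTx hA k (hST _ (hA.shiftUnion x k) h)
end

section
/- Let G be a commutative preordered group and let L(S_M) be the regularisation of the least equivariant system of ideals S_M (where S_M(A) iff A contains an element a with a ≤ 0). If L(S_M)({a}) holds, then there exists n > 0 such that n·a ≤ 0 in G. -/
/-!
Regard `m • a + ∑ kᵢ • (±xᵢ) ≤ 0` with `m > 0` as a system of sign conditions and eliminate the
unknowns `xᵢ` one at a time, Fourier–Motzkin style: for a fixed choice of the remaining signs,
the two inequalities with `+x₀` and `-x₀` are scaled by the coefficient of `x₀` in the other one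
and added, which cancels `x₀` and keeps the coefficient of `a` positive. Once no unknowns are
left, what remains is `m • a ≤ 0`.
-/

open Finset

section

variable {G : Type*} [AddCommGroup G] [Preorder G] [AddLeftMono G]

theorem nsmul_add_nsmul_nonpos_of_cancel {u v x : G} {k l : ℕ}
    (hu : u + k • x ≤ 0) (hv : v + l • -x ≤ 0) : l • u + k • v ≤ 0 := by
  have hsum : l • (u + k • x) + k • (v + l • -x) = l • u + k • v := by
    simp only [smul_add, smul_neg, smul_comm l k]
    abel
  exact hsum ▸ add_nonpos (nsmul_nonpos hu l) (nsmul_nonpos hv k)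

/-- The hypothesis of the theorem with `a` weakened to a positive multiple `m • a`: in this form
it is preserved by eliminating an unknown. -/
def SignSolvable {n : ℕ} (a : G) (xs : Fin n → G) : Prop :=
  ∀ ε : Fin n → Bool, ∃ m : ℕ, 0 < m ∧
    ∃ k : Fin n → ℕ, m • a + ∑ i, k i • (if ε i then xs i else -(xs i)) ≤ 0

theorem SignSolvable.tail {n : ℕ} {a : G} {xs : Fin (n + 1) → G} (h : SignSolvable a xs) :
    SignSolvable a (Fin.tail xs) := by
  intro ε
  set s : Fin n → G := fun i => if ε i then xs i.succ else -(xs i.succ)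
  obtain ⟨m₁, hm₁, k₁, h₁⟩ := h (Fin.cons true ε)
  obtain ⟨m₂, hm₂, k₂, h₂⟩ := h (Fin.cons false ε)
  simp only [Fin.sum_univ_succ, Fin.cons_zero, Fin.cons_succ, if_true, Bool.false_eq_true,
    if_false] at h₁ h₂
  rcases Nat.eq_zero_or_pos (k₁ 0) with hk₁ | hk₁
  · exact ⟨m₁, hm₁, fun i => k₁ i.succ, by simpa [hk₁, Fin.tail] using h₁⟩
  refine ⟨k₂ 0 * m₁ + k₁ 0 * m₂, by positivity, fun i => k₂ 0 * k₁ i.succ + k₁ 0 * k₂ i.succ, ?_⟩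
  have hplus : (m₁ • a + ∑ i, k₁ i.succ • s i) + k₁ 0 • xs 0 ≤ 0 := by
    rwa [add_assoc, add_comm (∑ i, _)]
  have hminus : (m₂ • a + ∑ i, k₂ i.succ • s i) + k₂ 0 • -xs 0 ≤ 0 := by
    rwa [add_assoc, add_comm (∑ i, _)]
  have hcancel := nsmul_add_nsmul_nonpos_of_cancel hplus hminus
  convert hcancel using 1
  simp only [add_smul, mul_smul, sum_add_distrib, smul_add, smul_sum]
  abel

theorem SignSolvable.exists_nsmul_nonpos {n : ℕ} {a : G} {xs : Fin n → G}
    (h : SignSolvable a xs) : ∃ m : ℕ, 0 < m ∧ m • a ≤ 0 := by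
  induction n with
  | zero =>
    obtain ⟨m, hm, k, hk⟩ := h finZeroElim
    exact ⟨m, hm, by simpa using hk⟩
  | succ n ih => exact ih h.tail

end

theorem lorenzen_regularisation_singleton {G : Type*} [AddCommGroup G] [Preorder G]
    [CovariantClass G G (· + ·) (· ≤ ·)] (a : G)
    (h : ∃ (n : ℕ) (xs : Fin n → G), ∀ ε : Fin n → Bool,
      ∃ k : Fin n → ℕ, a + ∑ i, (k i) • (if ε i then xs i else -(xs i)) ≤ 0) :
    ∃ m : ℕ, 0 < m ∧ m • a ≤ 0 := by
  obtain ⟨n, xs, hxs⟩ := h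
  refine SignSolvable.exists_nsmul_nonpos (xs := xs) fun ε => ?_
  obtain ⟨k, hk⟩ := hxs ε
  exact ⟨1, one_pos, k, by rwa [one_nsmul]⟩
end

section
/- Let S be an equivariant system of ideals on a preordered commutative group G, with associated preorder A ≤_S B on nonempty finite subsets defined by A ▷ b for all b in B. Define R(A) to hold iff there exists a nonempty finite subset B with A + B ≤_S B. Then R is the regularisation of S: R is the least regular equivariant system of ideals containing S (Prüfer's characterization). -/
open Finset Pointwise

/-- An equivariant system of ideals on a preordered commutative group:
a relation `A ▷ x` between nonempty finite subsets and elements satisfying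
weakening, cut, `{a} ▷ x` when `a ≤ x`, and translation invariance. -/
structure IsEquivariantIdeal {G : Type*} [AddCommGroup G] [Preorder G]
    [CovariantClass G G (· + ·) (· ≤ ·)] [DecidableEq G]
    (rhd : Finset G → G → Prop) : Prop where
  s1 : ∀ {A A' : Finset G} {x : G}, A'.Nonempty → A' ⊆ A → rhd A' x → rhd A x
  s2 : ∀ {A : Finset G} {x y : G}, A.Nonempty → rhd (insert y A) x → rhd A y → rhd A x
  s3 : ∀ {a x : G}, a ≤ x → rhd {a} x
  s4 : ∀ {A : Finset G} {x : G} (y : G), rhd A x ↔ rhd (A.image (· + y)) (x + y)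

/-- Regularity for the predicate `S A = A ▷ 0` of an equivariant system of ideals. -/
def IsRegularPred {G : Type*} [AddCommGroup G] [DecidableEq G]
    (S : Finset G → Prop) : Prop :=
  (∀ A B : Finset G, A.Nonempty → B.Nonempty →
    S ((A + B) ∪ A) → S ((A + B) ∪ B) → S (A + B)) ∧
  (∀ x : G, S {x, -x})

/-!
`R` inherits weakening and translation invariance from `S`. For cut, if `B` witnesses
`R (insert y A)` and `C` witnesses `R (A - y)`, then `B + C` witnesses `R A`: translating the
second witness by `y + B` shows `A + B + C ≤_S y + B + C`, which removes `y` from the first.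
Regularity is witnessed the same way by `(C + D) ∪ (A + C + D)`, and `{x, -x}` by `{0, x}`.

For minimality, `A + D ≤_S D` gives `A + D ≤_R' D` since `R'` contains `S`; induct on `|D|`.
If `D = {d}` this says `R' A`. Otherwise pick `d₀ ≠ d₁` in `D` and put `e = d₁ - d₀`.
Then `A ∪ (A + e)` satisfies the hypothesis with `D.erase d₁` (since `A + d₁ = (A + e) + d₀`),
and symmetrically `A ∪ (A - e)` with `D.erase d₀`. Regularity at `(A + e, {-e})`, together with `R' {e, -e}`,
eliminates both translates and gives `R' A`.
-/

section Regularisation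

variable {G : Type*}

/-- `A ≤_S B` in the paper's notation. -/
def Entails (rhd : Finset G → G → Prop) (A B : Finset G) : Prop := ∀ b ∈ B, rhd A b

theorem Entails.union [DecidableEq G] {rhd : Finset G → G → Prop} {A B C : Finset G}
    (hB : Entails rhd A B) (hC : Entails rhd A C) : Entails rhd A (B ∪ C) := by
  intro x hx
  rcases mem_union.1 hx with hx | hx
  exacts [hB x hx, hC x hx]

variable [AddCommGroup G] [DecidableEq G]

/-- For an equivariant system `▷` and `P A := A ▷ 0`, this recovers `▷`. -/
def relOfPred (P : Finset G → Prop) (A : Finset G) (x : G) : Prop :=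
  P (A.image fun a => a - x)

def regularisation (rhd : Finset G → G → Prop) (A : Finset G) : Prop :=
  ∃ B : Finset G, B.Nonempty ∧ Entails rhd (A + B) B

theorem add_singleton_eq_image (A : Finset G) (y : G) : A + {y} = A.image (· + y) :=
  image₂_singleton_right

theorem image_sub_eq_add_singleton (A : Finset G) (x : G) : A.image (· - x) = A + {-x} := by
  simp_rw [sub_eq_add_neg, add_singleton_eq_image]

theorem regularisation.mono {rhd rhd' : Finset G → G → Prop}
    (hle : ∀ X x, X.Nonempty → rhd X x → rhd' X x) {A : Finset G} (hA : A.Nonempty) :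
    regularisation rhd A → regularisation rhd' A := by
  rintro ⟨B, hB, hAB⟩
  exact ⟨B, hB, fun b hb => hle _ b (hA.add hB) (hAB b hb)⟩

theorem regularisation_of_rhd_zero {rhd : Finset G → G → Prop} {A : Finset G} (hA : rhd A 0) :
    regularisation rhd A :=
  ⟨{0}, singleton_nonempty 0, by
    simpa only [Entails, singleton_zero, add_zero, mem_zero, forall_eq]⟩

theorem add_subset_union_add_erase {A D : Finset G} {d₀ d₁ : G} (hd₀ : d₀ ∈ D) (hne : d₀ ≠ d₁) :
    A + D ⊆ (A ∪ (A + {d₁ - d₀})) + D.erase d₁ := by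
  intro x hx
  obtain ⟨a, ha, d, hd, rfl⟩ := mem_add.1 hx
  by_cases hd₁ : d = d₁
  · subst hd₁
    refine mem_add.2 ⟨a + (d - d₀), mem_union_right _ (add_mem_add ha (mem_singleton_self _)), d₀,
      mem_erase.2 ⟨hne, hd₀⟩, by rw [add_assoc, sub_add_cancel]⟩
  · exact mem_add.2 ⟨a, mem_union_left _ ha, d, mem_erase.2 ⟨hd₁, hd⟩, rfl⟩

theorem IsRegularPred.of_union_add_singleton_of_union_neg {P : Finset G → Prop}
    (hP : IsRegularPred P) {A : Finset G} (hA : A.Nonempty) {e : G}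
    (h₁ : P (A ∪ (A + {e}))) (h₂ : P (A ∪ {-e})) : P A := by
  have hcancel : A + {e} + {-e} = A := by
    rw [add_assoc, singleton_add_singleton, add_neg_cancel, singleton_zero, add_zero]
  have := hP.1 (A + {e}) {-e} (hA.add (singleton_nonempty e)) (singleton_nonempty _)
    (by rwa [hcancel]) (by rwa [hcancel])
  rwa [hcancel] at this

variable [Preorder G] [CovariantClass G G (· + ·) (· ≤ ·)]

theorem isEquivariantIdeal_relOfPred {P : Finset G → Prop}
    (mono : ∀ {A A' : Finset G}, A.Nonempty → A ⊆ A' → P A → P A')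
    (cut : ∀ {A : Finset G} {y : G}, A.Nonempty → P (insert y A) → P (A + {-y}) → P A)
    (singleton_of_nonpos : ∀ {c : G}, c ≤ 0 → P {c}) :
    IsEquivariantIdeal (relOfPred P) where
  s1 hA' hsub hP := mono (hA'.image _) (image_subset_image hsub) hP
  s2 {A x y} hA hins hy := by
    refine cut (y := y - x) (hA.image _) ?_ ?_
    · simpa only [relOfPred, image_insert] using hins
    · rw [← image_sub_eq_add_singleton, image_image]
      simpa only [relOfPred, Function.comp_def, sub_sub_sub_cancel_right] using hy
  s3 hax := by
    simpa only [relOfPred, image_singleton] using singleton_of_nonpos (sub_nonpos.2 hax)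
  s4 y := by
    simp only [relOfPred, image_image, Function.comp_def, add_sub_add_right_eq_sub]

namespace IsEquivariantIdeal

variable {rhd : Finset G → G → Prop} (h : IsEquivariantIdeal rhd)
include h

theorem rhd_of_mem {A : Finset G} {a : G} (ha : a ∈ A) : rhd A a :=
  h.s1 (singleton_nonempty a) (singleton_subset_iff.2 ha) (h.s3 le_rfl)

theorem rhd_add_singleton {A : Finset G} {x : G} (y : G) (hx : rhd A x) :
    rhd (A + {y}) (x + y) := by
  rw [add_singleton_eq_image]
  exact (h.s4 y).1 hx

theorem rhd_of_entails_of_rhd_union {A B : Finset G} {x : G} (hA : A.Nonempty)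
    (hAB : Entails rhd A B) (hx : rhd (A ∪ B) x) : rhd A x := by
  induction B using Finset.induction_on with
  | empty => simpa using hx
  | insert b B _ ih =>
    rw [union_insert] at hx
    have hb : rhd (A ∪ B) b := h.s1 hA subset_union_left (hAB b (mem_insert_self b B))
    exact ih (fun y hy => hAB y (mem_insert_of_mem hy)) (h.s2 (hA.mono subset_union_left) hx hb)

theorem entails_of_subset {A B : Finset G} (hBA : B ⊆ A) : Entails rhd A B :=
  fun _ hb => h.rhd_of_mem (hBA hb)

theorem entails_mono_left {A A' B : Finset G} (hA : A.Nonempty) (hAA' : A ⊆ A')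
    (hAB : Entails rhd A B) : Entails rhd A' B :=
  fun b hb => h.s1 hA hAA' (hAB b hb)

theorem entails_cut {A B C : Finset G} (hA : A.Nonempty) (hAB : Entails rhd A B)
    (hC : Entails rhd (A ∪ B) C) : Entails rhd A C :=
  fun c hc => h.rhd_of_entails_of_rhd_union hA hAB (hC c hc)

theorem entails_add_right {A B : Finset G} (hA : A.Nonempty) (C : Finset G)
    (hAB : Entails rhd A B) : Entails rhd (A + C) (B + C) := by
  intro x hx
  obtain ⟨b, hb, c, hc, rfl⟩ := mem_add.1 hx
  exact h.s1 (hA.add (singleton_nonempty c)) (add_subset_add_left (singleton_subset_iff.2 hc))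
    (h.rhd_add_singleton c (hAB b hb))

theorem regularisation_of_subset {A A' : Finset G} (hA : A.Nonempty) (hAA' : A ⊆ A') :
    regularisation rhd A → regularisation rhd A' := by
  rintro ⟨B, hB, hAB⟩
  exact ⟨B, hB, h.entails_mono_left (hA.add hB) (add_subset_add_right hAA') hAB⟩

theorem regularisation_cut {A : Finset G} {y : G} (hA : A.Nonempty) :
    regularisation rhd (insert y A) → regularisation rhd (A + {-y}) → regularisation rhd A := by
  rintro ⟨B, hB, hyAB⟩ ⟨C, hC, hAC⟩
  refine ⟨B + C, hB.add hC, ?_⟩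
  have hyABC : Entails rhd (({y} + B + C) ∪ (A + B + C)) (B + C) := by
    simpa only [insert_eq, union_add] using
      h.entails_add_right ((insert_nonempty y A).add hB) C hyAB
  have hABC : Entails rhd (A + B + C) ({y} + B + C) := by
    have hshift := h.entails_add_right ((hA.add (singleton_nonempty _)).add hC) ({y} + B) hAC
    rwa [add_add_add_comm, add_assoc A, singleton_add_singleton, neg_add_cancel, singleton_zero,
      add_zero, add_comm C B, ← add_assoc, add_comm C] at hshift
  rw [← add_assoc]
  exact h.entails_cut ((hA.add hB).add hC) hABC (by rwa [union_comm])

theorem regularisation_singleton_of_nonpos {c : G} (hc : c ≤ 0) : regularisation rhd {c} :=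
  ⟨{0}, singleton_nonempty 0, by simpa [Entails] using h.s3 hc⟩

theorem isEquivariantIdeal_relOfPred_regularisation :
    IsEquivariantIdeal (relOfPred (regularisation rhd)) :=
  isEquivariantIdeal_relOfPred h.regularisation_of_subset h.regularisation_cut
    h.regularisation_singleton_of_nonpos

theorem regularisation_add {A B : Finset G} (hA : A.Nonempty) (hB : B.Nonempty) :
    regularisation rhd ((A + B) ∪ A) → regularisation rhd ((A + B) ∪ B) →
      regularisation rhd (A + B) := by
  rintro ⟨C, hC, hC_le⟩ ⟨D, hD, hD_le⟩
  have hAB : (A + B).Nonempty := hA.add hB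
  have hCD : Entails rhd ((A + B + (C + D)) ∪ (A + (C + D))) (C + D) := by
    simpa only [union_add, add_assoc] using
      h.entails_add_right ((hAB.mono subset_union_left).add hC) D hC_le
  have hACD : Entails rhd ((A + B + (C + D)) ∪ (A + B + (A + (C + D)))) (A + (C + D)) := by
    have hshift := h.entails_add_right ((hAB.mono subset_union_left).add hD) (C + A) hD_le
    have hleft : (A + B ∪ B) + D + (C + A) = (A + B + (C + D)) ∪ (A + B + (A + (C + D))) := by
      rw [union_add, union_add, union_comm]
      congr 1 <;> abel
    rwa [hleft, show D + (C + A) = A + (C + D) by abel] at hshift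
  refine ⟨(C + D) ∪ (A + (C + D)), (hC.add hD).mono subset_union_left, ?_⟩
  have hK : (A + B + (C + D) ∪ (A + B + (A + (C + D)))).Nonempty :=
    (hAB.add (hC.add hD)).mono subset_union_left
  rw [add_union]
  refine Entails.union (h.entails_cut hK hACD ?_) hACD
  exact h.entails_mono_left ((hAB.add (hC.add hD)).mono subset_union_left)
    (union_subset_union subset_union_left le_rfl) hCD

theorem regularisation_pair_neg (x : G) : regularisation rhd {x, -x} := by
  refine ⟨{0, x}, insert_nonempty 0 {x}, ?_⟩
  refine h.entails_of_subset (insert_subset_iff.2 ⟨?_, singleton_subset_iff.2 ?_⟩)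
  · exact mem_add.2 ⟨-x, by simp, x, by simp, neg_add_cancel x⟩
  · exact mem_add.2 ⟨x, by simp, 0, by simp, add_zero x⟩

theorem isRegularPred_regularisation : IsRegularPred (regularisation rhd) :=
  ⟨fun _ _ hA hB => h.regularisation_add hA hB, h.regularisation_pair_neg⟩

end IsEquivariantIdeal

variable {P : Finset G → Prop}

theorem mono_of_isEquivariantIdeal_relOfPred (hT : IsEquivariantIdeal (relOfPred P))
    {A A' : Finset G} (hA : A.Nonempty) (hAA' : A ⊆ A') (hP : P A) : P A' := by
  simpa only [relOfPred, sub_zero, image_id'] using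
    hT.s1 (x := 0) hA hAA' (by simpa only [relOfPred, sub_zero, image_id'] using hP)

theorem relOfPred_of_rhd {rhd : Finset G → G → Prop} (h : IsEquivariantIdeal rhd)
    (hS : ∀ A : Finset G, A.Nonempty → rhd A 0 → P A) {A : Finset G} {x : G}
    (hA : A.Nonempty) (hx : rhd A x) : relOfPred P A x := by
  have hshift := (h.s4 (-x)).1 hx
  rw [add_neg_cancel] at hshift
  exact hS _ (hA.image _) (by simpa only [sub_eq_add_neg] using hshift)

namespace IsRegularPred

variable (hP : IsRegularPred P) (hT : IsEquivariantIdeal (relOfPred P))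
include hP hT

theorem of_union_add_singleton_of_union_add_neg {A : Finset G} (hA : A.Nonempty) {e : G}
    (h₁ : P (A ∪ (A + {e}))) (h₂ : P (A ∪ (A + {-e}))) : P A := by
  refine hP.of_union_add_singleton_of_union_neg hA h₁ ?_
  refine hP.of_union_add_singleton_of_union_neg (hA.mono subset_union_left) (e := -e) ?_ ?_
  · refine mono_of_isEquivariantIdeal_relOfPred hT (hA.mono subset_union_left) ?_ h₂
    exact union_subset_union subset_union_left (add_subset_add_right subset_union_left)
  · refine mono_of_isEquivariantIdeal_relOfPred hT (insert_nonempty _ _) ?_ (hP.2 e)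
    intro z hz
    simp only [neg_neg, mem_insert, mem_singleton, mem_union] at hz ⊢
    tauto

theorem of_regularisation_relOfPred {A : Finset G} (hA : A.Nonempty)
    (hR : regularisation (relOfPred P) A) : P A := by
  obtain ⟨D, hD, hAD⟩ := hR
  induction D using Finset.strongInduction generalizing A with
  | H D ih =>
  obtain ⟨d, rfl⟩ | ⟨d₀, hd₀, d₁, hd₁, hne⟩ := hD.exists_eq_singleton_or_nontrivial
  · simpa only [relOfPred, add_singleton_eq_image, image_image, Function.comp_def,
      add_sub_cancel_right, image_id'] using hAD d (mem_singleton_self d)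
  · have branch : ∀ {d d'}, d ∈ D → d' ∈ D → d ≠ d' → P (A ∪ (A + {d' - d})) :=
      fun hd hd' hne => ih _ (erase_ssubset hd') (hA.mono subset_union_left)
        ⟨_, mem_erase.2 ⟨hne, hd⟩⟩ (hT.entails_mono_left (hA.add hD)
          (add_subset_union_add_erase hd hne) fun x hx => hAD x (mem_of_mem_erase hx))
    exact hP.of_union_add_singleton_of_union_add_neg hT hA (branch hd₀ hd₁ hne)
      (by simpa only [neg_sub] using branch hd₁ hd₀ hne.symm)

end IsRegularPred

end Regularisation

theorem prufer_regularisation {G : Type*} [AddCommGroup G] [Preorder G]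
    [CovariantClass G G (· + ·) (· ≤ ·)] [DecidableEq G]
    (rhd : Finset G → G → Prop) (h : IsEquivariantIdeal rhd) :
    -- R(A) iff there is a nonempty finite B with A + B ≤_S B
    (IsEquivariantIdeal (fun A x =>
      ∃ B : Finset G, B.Nonempty ∧ ∀ b ∈ B, rhd ((A.image (fun a => a - x)) + B) b)) ∧
    IsRegularPred (fun A : Finset G => ∃ B : Finset G, B.Nonempty ∧ ∀ b ∈ B, rhd (A + B) b) ∧
    (∀ A : Finset G, A.Nonempty → rhd A 0 →
      ∃ B : Finset G, B.Nonempty ∧ ∀ b ∈ B, rhd (A + B) b) ∧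
    (∀ R' : Finset G → Prop,
      IsEquivariantIdeal (fun A x => R' (A.image (fun a => a - x))) →
      IsRegularPred R' →
      (∀ A : Finset G, A.Nonempty → rhd A 0 → R' A) →
      ∀ A : Finset G, A.Nonempty →
        (∃ B : Finset G, B.Nonempty ∧ ∀ b ∈ B, rhd (A + B) b) → R' A) := by
  refine ⟨h.isEquivariantIdeal_relOfPred_regularisation, h.isRegularPred_regularisation,
    fun A _ h0 => regularisation_of_rhd_zero h0, ?_⟩
  intro R' hT hReg hS A hA hR
  exact hReg.of_regularisation_relOfPred hT hA
    (regularisation.mono (fun _ _ hX => relOfPred_of_rhd h hS hX) hA hR)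
end
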